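/- For c₁, c₃ ∈ [0, 1/2], the 4×4 doubly stochastic matrix with rows (c₁, 1/2−c₁, c₃, 1/2−c₃), (1/2−c₁, c₁, 1/2−c₃, c₃), (1/2−c₁, c₁, c₃, 1/2−c₃), (c₁, 1/2−c₁, 1/2−c₃, c₃) has eigenvalues 1, 0, and the two roots of x² − (2c₁+2c₃−1)x + (the appropriate constant), namely (c₁+c₃−1/2) ± (1/2)√(4c₁²+4c₃²−24c₁c₃+4c₁+4c₃−1). -/

import Mathlib

open Polynomial

def IsDoublyStochastic {n : ℕ} (A : Matrix (Fin n) (Fin n) ℝ) : Prop :=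
  (∀ i j, 0 ≤ A i j) ∧ (∀ i, ∑ j, A i j = 1) ∧ (∀ j, ∑ i, A i j = 1)

/-- The generic matrix of class C₃₀. -/
noncomputable def Mmat (c₁ c₃ : ℝ) : Matrix (Fin 4) (Fin 4) ℝ :=
  !![c₁, 1/2 - c₁, c₃, 1/2 - c₃;
     1/2 - c₁, c₁, 1/2 - c₃, c₃;
     1/2 - c₁, c₁, c₃, 1/2 - c₃;
     c₁, 1/2 - c₁, 1/2 - c₃, c₃]

/-!
Cofactor expansion gives the real characteristic polynomial
`X (X - 1) (X² - (2c₁ + 2c₃ - 1) X + 8c₁c₃ - 2c₁ - 2c₃ + 1/2)`. Over `ℂ` the quadratic factor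
splits: `X² - bX + c` has roots `b/2 ± s/2` for any `s` with `s² = b² - 4c`, and the
principal value `z ^ (1/2)` is such an `s`, whatever the sign of the discriminant.
-/

lemma Mmat_isDoublyStochastic {c₁ c₃ : ℝ} (h1 : c₁ ∈ Set.Icc (0 : ℝ) (1 / 2))
    (h3 : c₃ ∈ Set.Icc (0 : ℝ) (1 / 2)) : IsDoublyStochastic (Mmat c₁ c₃) := by
  obtain ⟨h1₀, h1₂⟩ := h1
  obtain ⟨h3₀, h3₂⟩ := h3
  refine ⟨fun i j => ?_, fun i => ?_, fun j => ?_⟩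
  · fin_cases i <;> fin_cases j <;> simp [Mmat] <;> linarith
  · fin_cases i <;> simp [Mmat, Fin.sum_univ_four] <;> ring
  · fin_cases j <;> simp [Mmat, Fin.sum_univ_four] <;> ring

lemma Mmat_charpoly (c₁ c₃ : ℝ) :
    (Mmat c₁ c₃).charpoly = X * (X - 1) *
      (X ^ 2 - C (2 * c₁ + 2 * c₃ - 1) * X + C (8 * c₁ * c₃ - 2 * c₁ - 2 * c₃ + 1 / 2)) := by
  refine Polynomial.funext fun t => ?_
  rw [Matrix.eval_charpoly, Matrix.det_succ_row_zero]
  simp [Fin.sum_univ_succ, Matrix.det_fin_three, Mmat, Fin.succAbove]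
  ring

lemma X_sq_sub_C_mul_X_add_C_eq_mul {K : Type*} [Field K] [CharZero K] {b c s : K}
    (hs : s ^ 2 = b ^ 2 - 4 * c) :
    X ^ 2 - C b * X + C c = (X - C (b / 2 + 1 / 2 * s)) * (X - C (b / 2 - 1 / 2 * s)) := by
  have hsum : C b = C (b / 2 + 1 / 2 * s) + C (b / 2 - 1 / 2 * s) := by
    rw [← map_add]; ring_nf
  have hprod : C c = C (b / 2 + 1 / 2 * s) * C (b / 2 - 1 / 2 * s) := by
    rw [← map_mul]; congr 1; linear_combination (1 / 4 : K) * hs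
  rw [hsum, hprod]
  ring

lemma Complex.cpow_one_half_sq (z : ℂ) : (z ^ ((1 : ℂ) / 2)) ^ 2 = z := by
  rw [one_div]
  exact_mod_cast cpow_ofNat_inv_pow z 2

theorem stmt15 (c₁ c₃ : ℝ) (h1 : c₁ ∈ Set.Icc (0 : ℝ) (1 / 2))
    (h3 : c₃ ∈ Set.Icc (0 : ℝ) (1 / 2)) :
    IsDoublyStochastic (Mmat c₁ c₃) ∧
    ((Mmat c₁ c₃).map (fun r => (r : ℂ))).charpoly =
      X * (X - C 1) *
        (X - C (((c₁ + c₃ - 1 / 2 : ℝ) : ℂ) + (1 / 2) *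
          ((4 * c₁ ^ 2 + 4 * c₃ ^ 2 - 24 * c₁ * c₃ + 4 * c₁ + 4 * c₃ - 1 : ℝ) : ℂ)
            ^ ((1 : ℂ) / 2))) *
        (X - C (((c₁ + c₃ - 1 / 2 : ℝ) : ℂ) - (1 / 2) *
          ((4 * c₁ ^ 2 + 4 * c₃ ^ 2 - 24 * c₁ * c₃ + 4 * c₁ + 4 * c₃ - 1 : ℝ) : ℂ)
            ^ ((1 : ℂ) / 2))) := by
  refine ⟨Mmat_isDoublyStochastic h1 h3, ?_⟩
  have hmid : ((c₁ + c₃ - 1 / 2 : ℝ) : ℂ) = (2 * c₁ + 2 * c₃ - 1 : ℂ) / 2 := by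
    push_cast; ring
  have hdiscr : ((((4 * c₁ ^ 2 + 4 * c₃ ^ 2 - 24 * c₁ * c₃ + 4 * c₁ + 4 * c₃ - 1 : ℝ) : ℂ))
      ^ ((1 : ℂ) / 2)) ^ 2 =
      (2 * c₁ + 2 * c₃ - 1 : ℂ) ^ 2 - 4 * (8 * c₁ * c₃ - 2 * c₁ - 2 * c₃ + 1 / 2) := by
    rw [Complex.cpow_one_half_sq]; push_cast; ring
  have hmap : ((Mmat c₁ c₃).map fun r => (r : ℂ)).charpoly =
      (Mmat c₁ c₃).charpoly.map Complex.ofRealHom :=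
    (Mmat c₁ c₃).charpoly_map Complex.ofRealHom
  rw [hmap, Mmat_charpoly, hmid,
    mul_assoc _ (X - C _), ← X_sq_sub_C_mul_X_add_C_eq_mul hdiscr]
  simp
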